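/- arXiv:2312.00521 — 2 statements merged into one kernel-verified Lean document; each statement's English description precedes it below -/
import Mathlib

section
/- Let T ≥ 1, h, b, p ≥ 0, w ∈ ℝ^T, q ∈ ℝ^T, σ ∈ ℝ_{>0}^T, and define for μ ∈ ℝ^T: a_t = h + b + p·1{t=T}, s_t = √(Σ_{k=1}^t σ_k²), β_t = (Σ_{k=1}^t (μ_k − q_k))/s_t, and C_ω(q) = Σ_{t=1}^T [ (a_t·Φ(β_t) − h)·Σ_{k=1}^t (μ_k − q_k) + a_t·φ(β_t)·s_t + w_t q_t − p·μ_t ]. Then for every τ ∈ {1,...,T}, the function μ_τ ↦ C_ω(q) (with all other μ_k and all σ_k fixed) is convex on ℝ. -/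
open MeasureTheory ProbabilityTheory
open scoped ENNReal NNReal

/-- The standard normal cumulative distribution function `Φ`. -/
noncomputable def stdNormalCDF (x : ℝ) : ℝ :=
  (gaussianReal 0 1 (Set.Iic x)).toReal

/-- The standard normal probability density function `φ`. -/
noncomputable def stdNormalPDF (x : ℝ) : ℝ := gaussianPDFReal 0 1 x

/-- Closed-form expected cost `C_ω(q)` of the multi-period newsvendor problem under
independent normal demands, as a function of the parameter vectors `μv` and `σ`. -/
noncomputable def normalCost (T : ℕ) (h b p : ℝ) (w q σ μv : ℕ → ℝ) : ℝ :=
  ∑ t ∈ Finset.Icc 1 T,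
    (((h + b + (if t = T then p else 0))
        * stdNormalCDF ((∑ k ∈ Finset.Icc 1 t, (μv k - q k))
            / Real.sqrt (∑ k ∈ Finset.Icc 1 t, (σ k) ^ 2)) - h)
      * (∑ k ∈ Finset.Icc 1 t, (μv k - q k))
     + (h + b + (if t = T then p else 0))
        * stdNormalPDF ((∑ k ∈ Finset.Icc 1 t, (μv k - q k))
            / Real.sqrt (∑ k ∈ Finset.Icc 1 t, (σ k) ^ 2))
        * Real.sqrt (∑ k ∈ Finset.Icc 1 t, (σ k) ^ 2)
     + w t * q t - p * μv t)

/-!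
Put `ψ(z) = z Φ(z) + φ(z)` (`= E[(z - Z)⁺]`); then `ψ' = Φ` is increasing, so `ψ` is convex.
With `S_t = ∑_{k ≤ t} (μ_k - q_k)`, the `t`-th summand of `C_ω` is
`a_t s_t ψ(S_t / s_t) - h S_t + w_t q_t - p μ_t`, a convex function of the affine quantity `S_t`
plus an affine function of `μ`. Hence `C_ω` is jointly convex in the mean vector `μ`, and in
particular along every coordinate line `x ↦ update μ τ x`.
-/

open Set Function Real

lemma continuous_stdNormalPDF : Continuous stdNormalPDF := by
  unfold stdNormalPDF gaussianPDFReal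
  fun_prop

lemma stdNormalCDF_eq_integral (x : ℝ) : stdNormalCDF x = ∫ t in Iic x, stdNormalPDF t := by
  rw [stdNormalCDF, gaussianReal_apply_eq_integral _ one_ne_zero,
    ENNReal.toReal_ofReal (integral_nonneg (gaussianPDFReal_nonneg 0 1))]
  rfl

lemma hasDerivAt_stdNormalCDF (x : ℝ) : HasDerivAt stdNormalCDF (stdNormalPDF x) x := by
  have hint : Integrable stdNormalPDF := integrable_gaussianPDFReal 0 1
  have hftc : ∀ y, stdNormalCDF y = stdNormalCDF 0 + ∫ t in (0 : ℝ)..y, stdNormalPDF t := by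
    intro y
    rw [stdNormalCDF_eq_integral, stdNormalCDF_eq_integral,
      ← intervalIntegral.integral_Iic_sub_Iic hint.integrableOn hint.integrableOn]
    ring
  rw [funext hftc]
  exact (intervalIntegral.integral_hasDerivAt_right hint.intervalIntegrable
    hint.aestronglyMeasurable.stronglyMeasurableAtFilter
    continuous_stdNormalPDF.continuousAt).const_add _

lemma hasDerivAt_stdNormalPDF (x : ℝ) : HasDerivAt stdNormalPDF (-x * stdNormalPDF x) x := by
  have hpdf : stdNormalPDF = fun y => (√(2 * π))⁻¹ * Real.exp (-y ^ 2 / 2) := by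
    funext y
    simp [stdNormalPDF, gaussianPDFReal]
  rw [hpdf]
  refine (((hasDerivAt_pow 2 x).neg.div_const 2).exp.const_mul _).congr_deriv ?_
  simp only [Pi.neg_apply, Nat.cast_ofNat, Nat.add_one_sub_one, pow_one]
  ring

lemma monotone_stdNormalCDF : Monotone stdNormalCDF := fun _ _ hxy =>
  ENNReal.toReal_mono (measure_ne_top _ _) (measure_mono (Iic_subset_Iic.2 hxy))

noncomputable def stdNormalShortfall (z : ℝ) : ℝ := z * stdNormalCDF z + stdNormalPDF z

lemma hasDerivAt_stdNormalShortfall (z : ℝ) :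
    HasDerivAt stdNormalShortfall (stdNormalCDF z) z := by
  refine (((hasDerivAt_id z).mul (hasDerivAt_stdNormalCDF z)).add
    (hasDerivAt_stdNormalPDF z)).congr_deriv ?_
  simp only [id]
  ring

lemma convexOn_stdNormalShortfall : ConvexOn ℝ univ stdNormalShortfall := by
  refine Monotone.convexOn_univ_of_deriv
    (fun z => (hasDerivAt_stdNormalShortfall z).differentiableAt) ?_
  rw [funext fun z => (hasDerivAt_stdNormalShortfall z).deriv]
  exact monotone_stdNormalCDF

lemma convexOn_normalPeriodCost {a s : ℝ} (h : ℝ) (ha : 0 ≤ a) (hs : 0 ≤ s) :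
    ConvexOn ℝ univ
      (fun y => (a * stdNormalCDF (y / s) - h) * y + a * stdNormalPDF (y / s) * s) := by
  rcases hs.eq_or_lt with rfl | hs
  -- `y / 0 = 0`, so for `s = 0` the term is linear in `y`
  · simp only [div_zero, mul_zero, add_zero]
    exact (LinearMap.mulLeft ℝ (a * stdNormalCDF 0 - h)).convexOn convex_univ
  have hrescale : (fun y => (a * stdNormalCDF (y / s) - h) * y + a * stdNormalPDF (y / s) * s)
      = fun y => (a * s) * stdNormalShortfall (s⁻¹ * y) - h * y := by
    funext y
    simp only [stdNormalShortfall]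
    field_simp
    ring
  rw [hrescale]
  exact ((convexOn_stdNormalShortfall.comp_linearMap (LinearMap.mulLeft ℝ s⁻¹)).smul
    (mul_nonneg ha hs.le)).sub ((LinearMap.mulLeft ℝ h).concaveOn convex_univ)

lemma convexOn_sum {ι E : Type*} [AddCommMonoid E] [Module ℝ E] {s : Set E} (hs : Convex ℝ s)
    (t : Finset ι) {f : ι → E → ℝ} (hf : ∀ i ∈ t, ConvexOn ℝ s (f i)) :
    ConvexOn ℝ s (fun x => ∑ i ∈ t, f i x) := by
  simp only [← Finset.sum_apply]
  exact Finset.sum_induction f (ConvexOn ℝ s) (fun _ _ => ConvexOn.add)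
    (convexOn_const 0 hs) hf

lemma ConvexOn.comp_sum_sub {ι : Type*} {g : ℝ → ℝ} (hg : ConvexOn ℝ univ g)
    (t : Finset ι) (q : ι → ℝ) :
    ConvexOn ℝ univ (fun μ : ι → ℝ => g (∑ k ∈ t, (μ k - q k))) := by
  let L : (ι → ℝ) →ᵃ[ℝ] ℝ :=
    (∑ k ∈ t, LinearMap.proj k).toAffineMap - AffineMap.const ℝ _ (∑ k ∈ t, q k)
  have hL : (fun μ : ι → ℝ => g (∑ k ∈ t, (μ k - q k))) = g ∘ L := by
    funext μ
    simp [L, Finset.sum_sub_distrib]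
  rw [hL]
  exact hg.comp_affineMap L

theorem convexOn_normalCost (T : ℕ) {h b p : ℝ} (hh : 0 ≤ h) (hb : 0 ≤ b) (hp : 0 ≤ p)
    (w q σ : ℕ → ℝ) : ConvexOn ℝ univ (normalCost T h b p w q σ) := by
  refine convexOn_sum convex_univ _ fun t _ => ?_
  have ha : 0 ≤ h + b + (if t = T then p else 0) := by split_ifs <;> positivity
  exact (((convexOn_normalPeriodCost h ha (Real.sqrt_nonneg _)).comp_sum_sub _ q).add_const
    (w t * q t)).sub ((p • LinearMap.proj t : (ℕ → ℝ) →ₗ[ℝ] ℝ).concaveOn convex_univ)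

lemma update_eq_lineMap {ι R : Type*} [DecidableEq ι] [Ring R] (f : ι → R) (i : ι) (x : R) :
    update f i x = AffineMap.lineMap (update f i 0) (update f i 1) x := by
  ext j
  rcases eq_or_ne j i with rfl | hj <;> simp [AffineMap.lineMap_apply_module', *]

theorem stmt_10_general
    (T : ℕ)
    (h b p : ℝ) (hh : 0 ≤ h) (hb : 0 ≤ b) (hp : 0 ≤ p)
    (w q σ μv : ℕ → ℝ) :
    ∀ τ, 1 ≤ τ → τ ≤ T →
      ConvexOn ℝ Set.univ
        (fun x : ℝ => normalCost T h b p w q σ (Function.update μv τ x)) := by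
  intro τ _ _
  have hline : (fun x => normalCost T h b p w q σ (update μv τ x))
      = normalCost T h b p w q σ ∘ AffineMap.lineMap (update μv τ 0) (update μv τ 1) :=
    funext fun x => congrArg _ (update_eq_lineMap μv τ x)
  rw [hline]
  exact (convexOn_normalCost T hh hb hp w q σ).comp_affineMap _

/-- The normal-demand newsvendor cost `C_ω(q)` is convex in each mean parameter `μ τ`
(with all other parameters fixed). -/
theorem stmt_10
    (T : ℕ) (hT : 1 ≤ T)
    (h b p : ℝ) (hh : 0 ≤ h) (hb : 0 ≤ b) (hp : 0 ≤ p)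
    (w q σ μv : ℕ → ℝ) (hσ : ∀ t, 1 ≤ t → t ≤ T → 0 < σ t) :
    ∀ τ, 1 ≤ τ → τ ≤ T →
      ConvexOn ℝ Set.univ
        (fun x : ℝ => normalCost T h b p w q σ (Function.update μv τ x)) :=
  stmt_10_general T h b p hh hb hp w q σ μv
end

section
/- Let T ≥ 1, let h, b, p ≥ 0 and w ∈ ℝ^T, let q ∈ ℕ^T, and let X_1,...,X_T be independent Poisson random variables with rates λ_1,...,λ_T > 0. Define I_t = Σ_{k=1}^t (q_k − X_k), I_t^+ = max(I_t, 0), I_t^− = max(−I_t, 0), Q_t = Σ_{k=1}^t q_k, Λ_t = Σ_{k=1}^t λ_k, a_t = h + b + p·1{t=T}, and let F̃_t be the CDF of the Poisson distribution with rate Λ_t (with F̃_t(−1) = 0). Then the expected cost p·E[I_T^−] + Σ_{t=1}^T ( h·E[I_t^+] + b·E[I_t^−] + w_t q_t − p·λ_t ) equals Σ_{t=1}^T [ a_t·Q_t·F̃_t(Q_t) − Λ_t·a_t·F̃_t(Q_t − 1) + (b + p·1{t=T})·(Λ_t − Q_t) + w_t q_t − p·λ_t ]. -/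
/-!
The partial demand `X₁ + ⋯ + X_t` is Poisson with rate `Λ_t`, so every expectation in the
cost is one against `Po(Λ_t)`. For `N ~ Po(r)` the identity `n · P(N = n) = r · P(N = n - 1)`
gives `E[(Q - N)⁺] = Q F(Q) - r F(Q - 1)`, and `(N - Q)⁺ = (Q - N)⁺ + N - Q` with `E[N] = r`
gives `E[(N - Q)⁺] = E[(Q - N)⁺] + r - Q`.
-/

open MeasureTheory ProbabilityTheory Finset
open scoped NNReal

set_option linter.deprecated false

namespace ProbabilityTheory

lemma succ_mul_poissonPMFReal_succ (r : ℝ≥0) (n : ℕ) :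
    ((n : ℝ) + 1) * poissonPMFReal r (n + 1) = r * poissonPMFReal r n := by
  simp only [poissonPMFReal, Nat.factorial_succ, Nat.cast_mul, Nat.cast_succ, pow_succ]
  field_simp

lemma hasSum_mul_poissonPMFReal (r : ℝ≥0) :
    HasSum (fun n : ℕ => (n : ℝ) * poissonPMFReal r n) r := by
  refine (hasSum_nat_add_iff' 1).mp ?_
  have h := (hasSum_one_poissonMeasure r).mul_left (r : ℝ)
  simp only [Nat.cast_add, Nat.cast_one, succ_mul_poissonPMFReal_succ, range_one, sum_singleton,
    Nat.cast_zero, zero_mul, sub_zero]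
  simpa only [mul_one, poissonPMFReal] using h

lemma integrable_natCast_poissonMeasure (r : ℝ≥0) :
    Integrable (fun n : ℕ => (n : ℝ)) (poissonMeasure r) := by
  rw [integrable_poissonMeasure_iff]
  exact (hasSum_mul_poissonPMFReal r).summable.congr fun n => by
    rw [Real.norm_natCast, mul_comm]
    rfl

lemma integral_natCast_poissonMeasure (r : ℝ≥0) :
    ∫ n : ℕ, (n : ℝ) ∂(poissonMeasure r) = r := by
  rw [integral_poissonMeasure]
  refine (tsum_congr fun n => ?_).trans (hasSum_mul_poissonPMFReal r).tsum_eq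
  rw [smul_eq_mul, mul_comm, poissonPMFReal]

lemma sum_range_succ_mul_poissonPMFReal (r : ℝ≥0) (Q : ℕ) :
    ∑ n ∈ range (Q + 1), (n : ℝ) * poissonPMFReal r n
      = r * ∑ n ∈ range Q, poissonPMFReal r n := by
  rw [sum_range_succ', mul_sum]
  simp [succ_mul_poissonPMFReal_succ]

lemma integral_max_const_sub_zero_poissonMeasure (r : ℝ≥0) (Q : ℕ) :
    ∫ n : ℕ, max ((Q : ℝ) - n) 0 ∂(poissonMeasure r)
      = Q * ∑ n ∈ range (Q + 1), poissonPMFReal r n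
        - r * ∑ n ∈ range Q, poissonPMFReal r n := by
  rw [integral_poissonMeasure, tsum_eq_sum (s := range (Q + 1)),
    ← sum_range_succ_mul_poissonPMFReal, mul_sum, ← sum_sub_distrib]
  · refine sum_congr rfl fun n hn => ?_
    have : (n : ℝ) ≤ Q := by exact_mod_cast Nat.lt_succ_iff.mp (mem_range.mp hn)
    rw [max_eq_left (by linarith), smul_eq_mul, poissonPMFReal]
    ring
  · intro n hn
    have : (Q : ℝ) ≤ n := by
      rw [mem_range, not_lt] at hn
      exact_mod_cast (Nat.le_succ Q).trans hn
    rw [max_eq_right (by linarith), smul_zero]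

lemma integral_max_sub_const_zero_poissonMeasure (r : ℝ≥0) (Q : ℕ) :
    ∫ n : ℕ, max ((n : ℝ) - Q) 0 ∂(poissonMeasure r)
      = (Q * ∑ n ∈ range (Q + 1), poissonPMFReal r n
        - r * ∑ n ∈ range Q, poissonPMFReal r n) + (r - Q) := by
  have hbdd : Integrable (fun n : ℕ => max ((Q : ℝ) - n) 0) (poissonMeasure r) := by
    refine .of_bound .of_discrete Q (ae_of_all _ fun n => ?_)
    rw [Real.norm_of_nonneg (le_max_right _ _)]
    exact max_le (by linarith [n.cast_nonneg (α := ℝ)]) (Q.cast_nonneg)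
  have hid : (fun n : ℕ => max ((n : ℝ) - Q) 0)
      = fun n : ℕ => max ((Q : ℝ) - n) 0 + ((n : ℝ) - Q) := by
    ext n
    rcases le_total (n : ℝ) Q with h | h
    · rw [max_eq_right (by linarith), max_eq_left (by linarith)]; ring
    · rw [max_eq_left (by linarith), max_eq_right (by linarith)]; ring
  have hsub : Integrable (fun n : ℕ => (n : ℝ) - Q) (poissonMeasure r) :=
    (integrable_natCast_poissonMeasure r).sub (integrable_const _)
  rw [hid, integral_add hbdd hsub,
    integral_sub (integrable_natCast_poissonMeasure r) (integrable_const _),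
    integral_max_const_sub_zero_poissonMeasure, integral_natCast_poissonMeasure]
  simp

lemma iIndepFun.hasLaw_sum_poissonMeasure {ι Ω : Type*} [MeasurableSpace Ω] {P : Measure Ω}
    {X : ι → Ω → ℕ} {r : ι → ℝ≥0} (hindep : iIndepFun X P)
    (hX : ∀ i, HasLaw (X i) (poissonMeasure (r i)) P) {s : Finset ι} (hs : s.Nonempty) :
    HasLaw (∑ i ∈ s, X i) (poissonMeasure (∑ i ∈ s, r i)) P := by
  induction hs using Finset.Nonempty.cons_induction with
  | singleton i => simpa using hX i
  | cons i s hi hs ih =>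
    rw [sum_cons, sum_cons, add_comm, add_comm (r i)]
    exact IndepFun.hasLaw_add_poissonMeasure
      (hindep.indepFun_finsetSum_of_notMem₀ (fun j => (hX j).aemeasurable) hi) ih (hX i)

section Inventory

variable {Ω ι : Type*} [MeasurableSpace Ω] {P : Measure Ω} {X : ι → Ω → ℕ} {r : ℝ≥0}

lemma integral_max_sum_sub_zero_of_hasLaw_poisson {s : Finset ι}
    (hS : HasLaw (fun ω => ∑ k ∈ s, X k ω) (poissonMeasure r) P) (q : ι → ℕ) :
    ∫ ω, max (∑ k ∈ s, ((q k : ℝ) - X k ω)) 0 ∂P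
      = (∑ k ∈ s, q k : ℕ) * ∑ n ∈ range ((∑ k ∈ s, q k) + 1), poissonPMFReal r n
        - r * ∑ n ∈ range (∑ k ∈ s, q k), poissonPMFReal r n := by
  simp_rw [sum_sub_distrib, ← Nat.cast_sum, ← integral_max_const_sub_zero_poissonMeasure]
  exact hS.integral_comp (f := fun n : ℕ => max (((∑ k ∈ s, q k : ℕ) : ℝ) - n) 0)
    .of_discrete

lemma integral_max_neg_sum_sub_zero_of_hasLaw_poisson {s : Finset ι}
    (hS : HasLaw (fun ω => ∑ k ∈ s, X k ω) (poissonMeasure r) P) (q : ι → ℕ) :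
    ∫ ω, max (-∑ k ∈ s, ((q k : ℝ) - X k ω)) 0 ∂P
      = ((∑ k ∈ s, q k : ℕ) * ∑ n ∈ range ((∑ k ∈ s, q k) + 1), poissonPMFReal r n
        - r * ∑ n ∈ range (∑ k ∈ s, q k), poissonPMFReal r n)
        + (r - (∑ k ∈ s, q k : ℕ)) := by
  simp_rw [sum_sub_distrib, ← Nat.cast_sum, neg_sub,
    ← integral_max_sub_const_zero_poissonMeasure]
  exact hS.integral_comp (f := fun n : ℕ => max ((n : ℝ) - (∑ k ∈ s, q k : ℕ)) 0)
    .of_discrete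

end Inventory

end ProbabilityTheory

lemma Finset.sum_Icc_one_eq_sum_fin {M : Type*} [AddCommMonoid M] {t T : ℕ} (ht : t ≤ T)
    (f : ℕ → M) :
    ∑ k ∈ Icc 1 t, f k
      = ∑ i ∈ univ.filter (fun i : Fin T => (i : ℕ) < t), f ((i : ℕ) + 1) := by
  symm
  refine sum_bij (fun i _ => (i : ℕ) + 1) (fun i hi => ?_) (fun i _ j _ h => ?_) (fun k hk => ?_)
    (fun _ _ => rfl)
  · simp only [mem_filter, mem_univ, true_and] at hi
    simp only [mem_Icc]; omega
  · exact Fin.ext (by omega)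
  · simp only [mem_Icc] at hk
    exact ⟨⟨k - 1, by omega⟩, by simp; omega, by simp; omega⟩

theorem stmt_16_general
    {Ω : Type*} [MeasurableSpace Ω] (P : Measure Ω)
    (T : ℕ) (hT : 1 ≤ T)
    (h b p : ℝ)
    (w : ℕ → ℝ) (q : ℕ → ℕ)
    (lam : ℕ → ℝ≥0)
    (X : ℕ → Ω → ℕ) (hX : ∀ t, 1 ≤ t → t ≤ T → Measurable (X t))
    (hindep : iIndepFun
      (fun i : Fin T => X (i + 1)) P)
    (hlaw : ∀ t, 1 ≤ t → t ≤ T → P.map (X t) = poissonMeasure (lam t)) :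
    p * (∫ ω, max (-(∑ k ∈ Finset.Icc 1 T, ((q k : ℝ) - (X k ω : ℝ)))) 0 ∂P)
      + ∑ t ∈ Finset.Icc 1 T,
          (h * (∫ ω, max (∑ k ∈ Finset.Icc 1 t, ((q k : ℝ) - (X k ω : ℝ))) 0 ∂P)
            + b * (∫ ω, max (-(∑ k ∈ Finset.Icc 1 t, ((q k : ℝ) - (X k ω : ℝ)))) 0 ∂P)
            + w t * (q t : ℝ) - p * (lam t : ℝ))
    = ∑ t ∈ Finset.Icc 1 T,
        ((h + b + (if t = T then p else 0)) * ((∑ k ∈ Finset.Icc 1 t, q k : ℕ) : ℝ)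
            * (∑ x ∈ Finset.range ((∑ k ∈ Finset.Icc 1 t, q k) + 1),
                poissonPMFReal (∑ k ∈ Finset.Icc 1 t, lam k) x)
         - ((∑ k ∈ Finset.Icc 1 t, lam k : ℝ≥0) : ℝ)
            * (h + b + (if t = T then p else 0))
            * (∑ x ∈ Finset.range (∑ k ∈ Finset.Icc 1 t, q k),
                poissonPMFReal (∑ k ∈ Finset.Icc 1 t, lam k) x)
         + (b + (if t = T then p else 0))
            * (((∑ k ∈ Finset.Icc 1 t, lam k : ℝ≥0) : ℝ)
                - ((∑ k ∈ Finset.Icc 1 t, q k : ℕ) : ℝ))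
         + w t * (q t : ℝ) - p * (lam t : ℝ)) := by
  have hlawS : ∀ t, 1 ≤ t → t ≤ T → HasLaw (fun ω => ∑ k ∈ Icc 1 t, X k ω)
      (poissonMeasure (∑ k ∈ Icc 1 t, lam k)) P := by
    intro t ht₁ ht
    have := hindep.hasLaw_sum_poissonMeasure (r := fun i : Fin T => lam (i + 1))
      (fun i => ⟨(hX _ (by omega) i.isLt).aemeasurable, hlaw _ (by omega) i.isLt⟩)
      (s := univ.filter (fun i : Fin T => (i : ℕ) < t))
      ⟨⟨0, by omega⟩, by simp; omega⟩
    simp_rw [sum_Icc_one_eq_sum_fin ht]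
    convert this using 1
    ext ω
    simp only [Finset.sum_apply]
  -- the terminal penalty `p * E[I_T⁻]` is exactly the excess of the `t = T` summand
  rw [← eq_sub_iff_add_eq, ← sum_sub_distrib,
    sum_eq_single_of_mem T (mem_Icc.mpr ⟨hT, le_rfl⟩)]
  · rw [integral_max_sum_sub_zero_of_hasLaw_poisson (hlawS T hT le_rfl),
      integral_max_neg_sum_sub_zero_of_hasLaw_poisson (hlawS T hT le_rfl), if_pos rfl]
    ring
  · intro t ht htT
    obtain ⟨ht₁, ht⟩ := mem_Icc.mp ht
    rw [integral_max_sum_sub_zero_of_hasLaw_poisson (hlawS t ht₁ ht),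
      integral_max_neg_sum_sub_zero_of_hasLaw_poisson (hlawS t ht₁ ht), if_neg htT]
    ring

/-- Closed form of the expected cost of the static multi-period newsvendor problem under
independent Poisson demands `X t ~ Pois(λ t)`, where `F̃ t` is the CDF of the Poisson
distribution with rate `Λ t = ∑_{k=1}^t λ k`. -/
theorem stmt_16
    {Ω : Type*} [MeasurableSpace Ω] (P : Measure Ω) [IsProbabilityMeasure P]
    (T : ℕ) (hT : 1 ≤ T)
    (h b p : ℝ) (hh : 0 ≤ h) (hb : 0 ≤ b) (hp : 0 ≤ p)
    (w : ℕ → ℝ) (q : ℕ → ℕ)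
    (lam : ℕ → ℝ≥0) (hlam : ∀ t, 1 ≤ t → t ≤ T → 0 < lam t)
    (X : ℕ → Ω → ℕ) (hX : ∀ t, 1 ≤ t → t ≤ T → Measurable (X t))
    (hindep : iIndepFun
      (fun i : Fin T => X (i + 1)) P)
    (hlaw : ∀ t, 1 ≤ t → t ≤ T → P.map (X t) = poissonMeasure (lam t)) :
    p * (∫ ω, max (-(∑ k ∈ Finset.Icc 1 T, ((q k : ℝ) - (X k ω : ℝ)))) 0 ∂P)
      + ∑ t ∈ Finset.Icc 1 T,
          (h * (∫ ω, max (∑ k ∈ Finset.Icc 1 t, ((q k : ℝ) - (X k ω : ℝ))) 0 ∂P)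
            + b * (∫ ω, max (-(∑ k ∈ Finset.Icc 1 t, ((q k : ℝ) - (X k ω : ℝ)))) 0 ∂P)
            + w t * (q t : ℝ) - p * (lam t : ℝ))
    = ∑ t ∈ Finset.Icc 1 T,
        ((h + b + (if t = T then p else 0)) * ((∑ k ∈ Finset.Icc 1 t, q k : ℕ) : ℝ)
            * (∑ x ∈ Finset.range ((∑ k ∈ Finset.Icc 1 t, q k) + 1),
                poissonPMFReal (∑ k ∈ Finset.Icc 1 t, lam k) x)
         - ((∑ k ∈ Finset.Icc 1 t, lam k : ℝ≥0) : ℝ)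
            * (h + b + (if t = T then p else 0))
            * (∑ x ∈ Finset.range (∑ k ∈ Finset.Icc 1 t, q k),
                poissonPMFReal (∑ k ∈ Finset.Icc 1 t, lam k) x)
         + (b + (if t = T then p else 0))
            * (((∑ k ∈ Finset.Icc 1 t, lam k : ℝ≥0) : ℝ)
                - ((∑ k ∈ Finset.Icc 1 t, q k : ℕ) : ℝ))
         + w t * (q t : ℝ) - p * (lam t : ℝ)) :=
  stmt_16_general P T hT h b p w q lam X hX hindep hlaw
end
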